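/- In the diagram C̃_n (a path 0,1,...,n where both end vertices 0 and n are long: T_0 and T_n are identity maps, while T_1 adds a_0 + a_2 to a_1 and T_{n-1} adds a_{n-2} + a_n to a_{n-1}), the labels at the two ends are invariant under all moves, and the number of equivalence classes equals 2n + 2. -/

import Mathlib

/-!
Record a labeling `a` by `a 0` and its difference word `d q = a (q + 1) - a q`. The end moves
are trivial, and in characteristic two the inner move `T_i`, which replaces `a i` by
`a (i - 1) + a i + a (i + 1)`, just swaps `d (i - 1)` and `d i`. Adjacent transpositions generate
the symmetric group, so two labelings are equivalent iff they agree at `0` and their difference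
words are permutations of each other, i.e. have the same Hamming weight. The pair
(`a 0`, weight) takes all `2 (n + 1)` values.
-/

/-- The move `T_i` on the diagram `C̃_n` (vertices `0,…,n` in a path, with both end
vertices `0` and `n` long: `T_0` and `T_n` are identities, while every inner vertex sees
both of its path-neighbors). -/
def moveCt (n : ℕ) (i : Fin (n + 1)) (a : Fin (n + 1) → ZMod 2) : Fin (n + 1) → ZMod 2 :=
  fun j =>
    if j = i then
      a i + ∑ k ∈ Finset.univ.filter
        (fun k : Fin (n + 1) =>
          (k.val + 1 = i.val ∨ i.val + 1 = k.val) ∧ i.val ≠ 0 ∧ i.val ≠ n), a k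
    else a j

open Finset Equiv

lemma hammingNorm_comp_perm {ι β : Type*} [Fintype ι] [DecidableEq β] [Zero β]
    (x : ι → β) (σ : Perm ι) : hammingNorm (x ∘ σ) = hammingNorm x :=
  card_equiv σ (by simp)

lemma exists_perm_comp_eq_of_hammingNorm_eq {ι : Type*} [Fintype ι] [DecidableEq ι]
    {x y : ι → ZMod 2} (h : hammingNorm x = hammingNorm y) : ∃ σ : Perm ι, y = x ∘ σ := by
  obtain ⟨σ, hσ⟩ := Perm.exists_map_finset_eq {i | y i ≠ 0} {i | x i ≠ 0} h.symm
  refine ⟨σ, funext fun i => ?_⟩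
  have hi : y i ≠ 0 ↔ x (σ i) ≠ 0 := by
    simpa using congrArg (σ i ∈ ·) hσ
  exact (by decide : ∀ u v : ZMod 2, (u ≠ 0 ↔ v ≠ 0) → u = v) _ _ hi

namespace Ctilde

section Diff

variable {G : Type*} [AddCommGroup G] {n : ℕ}

def diff (a : Fin (n + 1) → G) (q : Fin n) : G := a q.succ - a q.castSucc

def ofDiff (c : G) (d : Fin n → G) (j : Fin (n + 1)) : G := c + Fin.partialSum d j

@[simp]
lemma ofDiff_zero (c : G) (d : Fin n → G) : ofDiff c d 0 = c := by simp [ofDiff]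

@[simp]
lemma diff_ofDiff (c : G) (d : Fin n → G) : diff (ofDiff c d) = d := by
  funext q
  simp [diff, ofDiff, Fin.partialSum_succ]

lemma eq_of_apply_zero_eq_of_diff_eq {a b : Fin (n + 1) → G} (h0 : a 0 = b 0)
    (hd : diff a = diff b) : a = b := by
  funext j
  induction j using Fin.induction with
  | zero => exact h0
  | succ q ih => simpa [diff, ih] using congrFun hd q

end Diff

section Moves

variable {n m : ℕ}

lemma moveCt_apply_of_ne {i j : Fin (n + 1)} (h : j ≠ i) (a : Fin (n + 1) → ZMod 2) :
    moveCt n i a j = a j :=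
  if_neg h

lemma moveCt_of_eq_zero_or_last {i : Fin (n + 1)} (hi : i = 0 ∨ i = Fin.last n)
    (a : Fin (n + 1) → ZMod 2) : moveCt n i a = a := by
  have hval : i.val = 0 ∨ i.val = n := by rcases hi with rfl | rfl <;> simp
  funext j
  unfold moveCt
  split_ifs with hj
  · rw [filter_false_of_mem (by omega), sum_empty, add_zero, hj]
  · rfl

@[simp]
lemma moveCt_apply_zero (i : Fin (n + 1)) (a : Fin (n + 1) → ZMod 2) : moveCt n i a 0 = a 0 := by
  by_cases hi : i = 0
  · rw [moveCt_of_eq_zero_or_last (.inl hi)]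
  · exact moveCt_apply_of_ne (Ne.symm hi) a

@[simp]
lemma moveCt_apply_last (i : Fin (n + 1)) (a : Fin (n + 1) → ZMod 2) :
    moveCt n i a (Fin.last n) = a (Fin.last n) := by
  by_cases hi : i = Fin.last n
  · rw [moveCt_of_eq_zero_or_last (.inr hi)]
  · exact moveCt_apply_of_ne (Ne.symm hi) a

lemma moveCt_castSucc_succ (i : Fin m) (a : Fin (m + 2) → ZMod 2) :
    moveCt (m + 1) i.castSucc.succ a = Function.update a i.castSucc.succ
      (a i.castSucc.succ + (a i.castSucc.castSucc + a i.succ.succ)) := by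
  have hnbrs : univ.filter (fun k : Fin (m + 2) =>
      (k.val + 1 = i.castSucc.succ.val ∨ i.castSucc.succ.val + 1 = k.val) ∧
        i.castSucc.succ.val ≠ 0 ∧ i.castSucc.succ.val ≠ m + 1) =
      {i.castSucc.castSucc, i.succ.succ} := by
    ext k
    simp only [mem_filter, mem_univ, true_and, mem_insert, mem_singleton, Fin.ext_iff,
      Fin.val_castSucc, Fin.val_succ]
    omega
  funext j
  unfold moveCt
  rw [hnbrs, sum_pair (by simp [Fin.ext_iff]; omega), Function.update_apply]

lemma diff_moveCt_castSucc_succ (i : Fin m) (a : Fin (m + 2) → ZMod 2) :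
    diff (moveCt (m + 1) i.castSucc.succ a) = diff a ∘ swap i.castSucc i.succ := by
  have hchar : ∀ x y z : ZMod 2, x + (y + z) - y = z - x := by decide
  have hchar' : ∀ x y z : ZMod 2, z - (x + (y + z)) = x - y := by decide
  have hlt : i.castSucc.castSucc < i.castSucc.succ := Fin.castSucc_lt_succ
  have hgt : i.castSucc.succ < i.succ.succ := Fin.succ_lt_succ_iff.mpr Fin.castSucc_lt_succ
  funext q
  simp only [diff, moveCt_castSucc_succ, Function.comp_apply]
  rcases eq_or_ne q i.castSucc with rfl | h₁
  · simp [Function.update_of_ne hlt.ne, hchar]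
  rcases eq_or_ne q i.succ with rfl | h₂
  · simp [Function.update_of_ne hgt.ne', hchar']
  · have h₃ : q.succ ≠ i.castSucc.succ := by simpa using h₁
    have h₄ : q.castSucc ≠ i.castSucc.succ := by
      simp only [ne_eq, Fin.ext_iff, Fin.val_castSucc, Fin.val_succ] at h₂ ⊢; omega
    simp [swap_apply_of_ne_of_ne h₁ h₂, Function.update_of_ne h₃, Function.update_of_ne h₄]

lemma exists_diff_moveCt_eq_comp_perm (i : Fin (n + 1)) (a : Fin (n + 1) → ZMod 2) :
    ∃ σ : Perm (Fin n), diff (moveCt n i a) = diff a ∘ σ := by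
  by_cases hend : i = 0 ∨ i = Fin.last n
  · exact ⟨1, by rw [moveCt_of_eq_zero_or_last hend]; rfl⟩
  push Not at hend
  obtain _ | m := n
  · exact absurd (Fin.fin_one_eq_zero i) hend.1
  obtain ⟨j, rfl⟩ := Fin.exists_succ_eq.mpr hend.1
  obtain ⟨k, rfl⟩ : ∃ k : Fin m, k.castSucc = j :=
    Fin.exists_castSucc_eq.mpr fun hj => hend.2 (hj ▸ Fin.succ_last m)
  exact ⟨_, diff_moveCt_castSucc_succ k a⟩

def moveRel (n : ℕ) (a b : Fin (n + 1) → ZMod 2) : Prop := ∃ i, b = moveCt n i a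

lemma eqvGen_moveRel_of_diff_eq_comp_perm (σ : Perm (Fin n)) :
    ∀ {a b : Fin (n + 1) → ZMod 2}, a 0 = b 0 → diff b = diff a ∘ σ →
      Relation.EqvGen (moveRel n) a b := by
  obtain _ | m := n
  · intro a b h0 hd
    rw [Subsingleton.elim σ 1] at hd
    exact eq_of_apply_zero_eq_of_diff_eq h0 hd.symm ▸ .refl _
  induction σ using Submonoid.induction_of_closure_eq_top_right
    (Perm.mclosure_swap_castSucc_succ m) with
  | one => exact fun h0 hd => eq_of_apply_zero_eq_of_diff_eq h0 hd.symm ▸ .refl _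
  | mul_right σ τ hτ ih =>
    intro a b h0 hd
    obtain ⟨k, rfl⟩ := hτ
    set c := ofDiff (a 0) (diff a ∘ σ)
    have hac : Relation.EqvGen (moveRel (m + 1)) a c := ih (by simp [c]) (by simp [c])
    have hcb : b = moveCt (m + 1) k.castSucc.succ c := by
      refine eq_of_apply_zero_eq_of_diff_eq (by simp [c, h0]) ?_
      rw [diff_moveCt_castSucc_succ, hd]
      simp [c, Function.comp_assoc]
    exact hac.trans _ _ _ (.rel _ _ ⟨_, hcb⟩)

end Moves

section Classification

variable {n : ℕ}

def classInvariant (a : Fin (n + 1) → ZMod 2) : ZMod 2 × Fin (n + 1) :=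
  (a 0, ⟨hammingNorm (diff a),
    Nat.lt_succ_of_le (hammingNorm_le_card_fintype.trans_eq (Fintype.card_fin n))⟩)

lemma classInvariant_moveCt (i : Fin (n + 1)) (a : Fin (n + 1) → ZMod 2) :
    classInvariant (moveCt n i a) = classInvariant a := by
  obtain ⟨σ, hσ⟩ := exists_diff_moveCt_eq_comp_perm i a
  simp [classInvariant, hσ, hammingNorm_comp_perm]

lemma eqvGen_moveRel_iff {a b : Fin (n + 1) → ZMod 2} :
    Relation.EqvGen (moveRel n) a b ↔ classInvariant a = classInvariant b := by
  constructor
  · intro h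
    induction h with
    | rel _ _ h => obtain ⟨i, rfl⟩ := h; exact (classInvariant_moveCt i _).symm
    | refl => rfl
    | symm _ _ _ ih => exact ih.symm
    | trans _ _ _ _ _ ih₁ ih₂ => exact ih₁.trans ih₂
  · intro h
    simp only [classInvariant, Prod.mk.injEq, Fin.mk.injEq] at h
    obtain ⟨σ, hσ⟩ := exists_perm_comp_eq_of_hammingNorm_eq h.2
    exact eqvGen_moveRel_of_diff_eq_comp_perm σ h.1 hσ

lemma classInvariant_surjective : Function.Surjective (classInvariant (n := n)) := by
  rintro ⟨c, k⟩
  obtain ⟨t, -, ht⟩ := exists_subset_card_eq (s := (univ : Finset (Fin n))) (n := k)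
    (by simpa using Nat.lt_succ_iff.mp k.isLt)
  let d : Fin n → ZMod 2 := fun q => if q ∈ t then 1 else 0
  have hnorm : hammingNorm d = k := by
    rw [← ht, hammingNorm]
    congr 1
    ext q
    simp [d]
  exact ⟨ofDiff c d, by simp [classInvariant, hnorm]⟩

theorem card_quot_moveRel : Nat.card (Quot (moveRel n)) = 2 * n + 2 := by
  let f : Quot (moveRel n) → ZMod 2 × Fin (n + 1) :=
    Quot.lift classInvariant fun a _ ⟨i, hb⟩ => hb ▸ (classInvariant_moveCt i a).symm
  have hf : Function.Bijective f := by
    refine ⟨fun x y hxy => ?_, fun p => ?_⟩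
    · induction x using Quot.ind
      induction y using Quot.ind
      exact Quot.eqvGen_sound (eqvGen_moveRel_iff.mpr hxy)
    · obtain ⟨a, ha⟩ := classInvariant_surjective p
      exact ⟨Quot.mk _ a, ha⟩
  rw [Nat.card_eq_of_bijective f hf]
  simp only [Nat.card_eq_fintype_card, Fintype.card_prod, ZMod.card, Fintype.card_fin]
  ring

end Classification

end Ctilde

theorem Ctilde_ends_invariant_and_card_general (n : ℕ) :
    (∀ (i : Fin (n + 1)) (a : Fin (n + 1) → ZMod 2),
      moveCt n i a 0 = a 0 ∧ moveCt n i a (Fin.last n) = a (Fin.last n)) ∧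
    Nat.card (Quot (fun a b : Fin (n + 1) → ZMod 2 => ∃ i, b = moveCt n i a)) =
      2 * n + 2 :=
  ⟨fun i a => ⟨Ctilde.moveCt_apply_zero i a, Ctilde.moveCt_apply_last i a⟩,
    Ctilde.card_quot_moveRel⟩

/-- In `C̃_n` the labels at the two end vertices are invariant under all moves, and the
number of equivalence classes equals `2n + 2`. -/
theorem Ctilde_ends_invariant_and_card (n : ℕ) (hn : 3 ≤ n) :
    (∀ (i : Fin (n + 1)) (a : Fin (n + 1) → ZMod 2),
      moveCt n i a 0 = a 0 ∧ moveCt n i a (Fin.last n) = a (Fin.last n)) ∧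
    Nat.card (Quot (fun a b : Fin (n + 1) → ZMod 2 => ∃ i, b = moveCt n i a)) =
      2 * n + 2 :=
  Ctilde_ends_invariant_and_card_general n
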